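/- Let n ≥ 2, let a > 0, and let δ′, γ₀ be real. On ℝ^{n+1} with covector coordinates split as (u_a, u_ξ, u_θ) ∈ ℝ × ℝ × ℝ^{n−1}, let G be the symmetric bilinear form on covectors with block matrix [[−a(2−a), −1, 0], [−1, 0, 0], [0, 0, I_{n−1}]]. Let u = (−a^{δ′−1/2}, −1, 0), u′ = (−1, 0, 0), and ξ = (p, q, w) with p, q ∈ ℝ, w ∈ ℝ^{n−1}, and let v ∈ ℝ. Then Φ_G(u,u′;ξ,v) = (1/2)·a^{δ′−1/2}·( q² + (a(2−a)p + q)² ) + (1/2)·a(2−a)·p² + (1/2)·(1 + a^{δ′+1/2}(2−a))·( |w|² − γ₀v² ). -/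
import Mathlib


noncomputable section

/-- The energy pairing `Φ_G(u,u′;ξ,v) = G(u,ξ)G(ξ,u′) − ½G(ξ,ξ)G(u,u′) + ½γ₀v²G(u,u′)`. -/
def Phi {m : ℕ} (G : (ℝ × ℝ × (Fin m → ℝ)) → (ℝ × ℝ × (Fin m → ℝ)) → ℝ)
    (γ₀ : ℝ) (u u' ξ : ℝ × ℝ × (Fin m → ℝ)) (v : ℝ) : ℝ :=
  G u ξ * G ξ u' - (1 / 2) * G ξ ξ * G u u' + (1 / 2) * γ₀ * v ^ 2 * G u u'

theorem stmt4 (n : ℕ) (hn : 2 ≤ n) (a δ' γ₀ : ℝ) (ha : 0 < a)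
    (G : (ℝ × ℝ × (Fin (n - 1) → ℝ)) → (ℝ × ℝ × (Fin (n - 1) → ℝ)) → ℝ)
    (hG : ∀ y z, G y z =
      -(a * (2 - a)) * y.1 * z.1 - y.1 * z.2.1 - y.2.1 * z.1 + ∑ i, y.2.2 i * z.2.2 i)
    (p q : ℝ) (w : Fin (n - 1) → ℝ) (v : ℝ) :
    Phi G γ₀ (-(a ^ (δ' - 1 / 2)), -1, 0) (-1, 0, 0) (p, q, w) v =
      (1 / 2) * a ^ (δ' - 1 / 2) * (q ^ 2 + (a * (2 - a) * p + q) ^ 2)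
        + (1 / 2) * (a * (2 - a)) * p ^ 2
        + (1 / 2) * (1 + a ^ (δ' + 1 / 2) * (2 - a)) * ((∑ i, w i ^ 2) - γ₀ * v ^ 2) := by
  have hsplit : a ^ (δ' + 1 / 2) = a ^ (δ' - 1 / 2) * a := by
    rw [show δ' + 1 / 2 = (δ' - 1 / 2) + 1 by ring, Real.rpow_add ha, Real.rpow_one]
  have hw : ∀ i, w i * w i = w i ^ 2 := fun i => (sq (w i)).symm
  simp only [Phi, hG, hsplit]
  simp [Finset.mul_sum, Finset.sum_sub_distrib, hw]
  ring
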